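/- Let μ be a probability measure on V, G ⊆ V measurable with μ(G) = p, and fix k with 0 ≤ k ≤ N-1 and β ∈ (0,1). If p < t*(k,β), where t*(k,β) is the unique solution in (0,1) of (1-β)/N = ∑_{i=0}^{k} C(N,i)(1-t)^i t^{N-i} (with t*(0,β) = (1-β)^{1/N}), then the μ^N-probability that at most k of the N i.i.d. samples fall outside G is strictly less than (1-β)/N. -/

import Mathlib

/-!
The samples outside `G` follow a binomial law: the event that exactly the samples indexed by `S`
miss `G` is a box of measure `(1 - p) ^ #S * p ^ (N - #S)`, so the probability in question is
`binCDF N k p`. For `k < N` the derivative of `binCDF N k` telescopes to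
`(N - k) * C(N, k) * (1 - t) ^ k * t ^ (N - k - 1)`, which is positive on `(0, 1)`; hence
`binCDF N k` is strictly increasing on `[0, 1]`, and `p < t` gives `binCDF N k p < binCDF N k t`.
-/

open MeasureTheory Set Finset

/-- The cumulative distribution function of a Binomial(N, 1-t) random variable at k. -/
noncomputable def binCDF (N k : ℕ) (t : ℝ) : ℝ :=
  ∑ i ∈ Finset.range (k + 1), (N.choose i : ℝ) * (1 - t) ^ i * t ^ (N - i)

lemma hasDerivAt_binCDF (N k : ℕ) (t : ℝ) :
    HasDerivAt (binCDF N k)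
      (((N - k : ℕ) : ℝ) * N.choose k * (1 - t) ^ k * t ^ (N - k - 1)) t := by
  induction k with
  | zero =>
    have hpow : binCDF N 0 = fun x ↦ x ^ N := by funext x; simp [binCDF]
    simpa [hpow] using hasDerivAt_pow N t
  | succ k ih =>
    have hsplit : binCDF N (k + 1) =
        fun x ↦ binCDF N k x + N.choose (k + 1) * ((1 - x) ^ (k + 1) * x ^ (N - (k + 1))) := by
      funext x
      simp only [binCDF, Finset.sum_range_succ _ (k + 1), mul_assoc]
    rw [hsplit]
    have hlast := ((((hasDerivAt_id' t).const_sub 1).pow (k + 1)).mul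
      (hasDerivAt_pow (N - (k + 1)) t)).const_mul (N.choose (k + 1) : ℝ)
    refine (ih.add hlast).congr_deriv ?_
    have hchoose : (N.choose (k + 1) : ℝ) * ((k : ℝ) + 1) = N.choose k * (N - k : ℕ) := by
      exact_mod_cast Nat.choose_succ_right_eq N k
    rw [show N - k - 1 = N - (k + 1) by omega, Nat.add_sub_cancel, Pi.pow_apply]
    push_cast
    linear_combination -(1 - t) ^ k * t ^ (N - (k + 1)) * hchoose

lemma binCDF_strictMonoOn {N k : ℕ} (hk : k < N) : StrictMonoOn (binCDF N k) (Icc 0 1) := by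
  refine strictMonoOn_of_deriv_pos (convex_Icc 0 1)
    (fun x _ ↦ (hasDerivAt_binCDF N k x).continuousAt.continuousWithinAt) fun x hx ↦ ?_
  obtain ⟨hx0, hx1⟩ : 0 < x ∧ x < 1 := by rwa [interior_Icc] at hx
  have hsub : (0 : ℝ) < (N - k : ℕ) := by exact_mod_cast Nat.sub_pos_of_lt hk
  have hchoose : (0 : ℝ) < N.choose k := by exact_mod_cast Nat.choose_pos hk.le
  have hx1' : 0 < 1 - x := by linarith
  rw [(hasDerivAt_binCDF N k x).deriv]
  positivity

section Sampling

variable {V ι : Type*} [Fintype ι]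

open Classical in
noncomputable def indicesOutside (G : Set V) (ω : ι → V) : Finset ι := {i | ω i ∉ G}

lemma card_indicesOutside (G : Set V) (ω : ι → V) :
    #(indicesOutside G ω) = Nat.card {i // ω i ∉ G} := by
  classical
  rw [Nat.card_eq_fintype_card, Fintype.card_subtype, indicesOutside]

lemma preimage_indicesOutside_singleton [DecidableEq ι] (G : Set V) (S : Finset ι) :
    indicesOutside G ⁻¹' {S} = Set.univ.pi fun i ↦ if i ∈ S then Gᶜ else G := by
  ext ω
  simp only [Set.mem_preimage, Set.mem_singleton_iff, Set.mem_pi, Set.mem_univ, true_implies,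
    Finset.ext_iff, indicesOutside, Finset.mem_filter, Finset.mem_univ, true_and]
  refine forall_congr' fun i ↦ ?_
  split_ifs with hi <;> simp [hi]

variable [MeasurableSpace V] {G : Set V}

lemma measurableSet_preimage_indicesOutside (hG : MeasurableSet G) (s : Set (Finset ι)) :
    MeasurableSet (indicesOutside G ⁻¹' s) := by
  classical
  rw [← biUnion_preimage_singleton]
  refine s.toFinite.measurableSet_biUnion fun S _ ↦ ?_
  rw [preimage_indicesOutside_singleton]
  exact .univ_pi fun i ↦ by split_ifs; exacts [hG.compl, hG]

variable (μ : Measure V) [IsProbabilityMeasure μ]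

lemma measureReal_pi_indicesOutside_eq (hG : MeasurableSet G) (S : Finset ι) :
    (Measure.pi fun _ : ι ↦ μ).real (indicesOutside G ⁻¹' {S}) =
      (1 - μ.real G) ^ #S * μ.real G ^ (Fintype.card ι - #S) := by
  classical
  rw [preimage_indicesOutside_singleton, measureReal_def, Measure.pi_pi, ENNReal.toReal_prod]
  simp only [apply_ite, ← measureReal_def, probReal_compl_eq_one_sub hG]
  rw [Finset.prod_ite, Finset.prod_const, Finset.prod_const, Finset.filter_mem_eq_inter,
    Finset.univ_inter, Finset.filter_not, Finset.filter_mem_eq_inter, Finset.univ_inter,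
    ← Finset.compl_eq_univ_sdiff, Finset.card_compl]

lemma measureReal_pi_card_indicesOutside_eq (hG : MeasurableSet G) (j : ℕ) :
    (Measure.pi fun _ : ι ↦ μ).real {ω | #(indicesOutside G ω) = j} =
      (Fintype.card ι).choose j * ((1 - μ.real G) ^ j * μ.real G ^ (Fintype.card ι - j)) := by
  have hfib : {ω | #(indicesOutside G ω) = j} =
      indicesOutside G ⁻¹' (powersetCard j (Finset.univ : Finset ι) : Set (Finset ι)) := by
    ext ω; simp [mem_powersetCard]
  rw [hfib, ← sum_measureReal_preimage_singleton _ fun S _ ↦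
    measurableSet_preimage_indicesOutside hG _, Finset.sum_congr rfl fun S hS ↦ by
    rw [measureReal_pi_indicesOutside_eq μ hG, (mem_powersetCard.mp hS).2]]
  simp [card_powersetCard]

lemma measureReal_pi_card_le (hG : MeasurableSet G) (k : ℕ) :
    (Measure.pi fun _ : ι ↦ μ).real {ω | Nat.card {i // ω i ∉ G} ≤ k} =
      binCDF (Fintype.card ι) k (μ.real G) := by
  have hfib : {ω : ι → V | Nat.card {i // ω i ∉ G} ≤ k} =
      (fun ω ↦ #(indicesOutside G ω)) ⁻¹' ↑(Finset.range (k + 1)) := by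
    ext ω; simp [card_indicesOutside]
  rw [hfib, ← sum_measureReal_preimage_singleton _ fun j _ ↦
    measurableSet_preimage_indicesOutside hG {S | #S = j}]
  simp only [Set.preimage, Set.mem_singleton_iff, measureReal_pi_card_indicesOutside_eq μ hG,
    binCDF]
  exact Finset.sum_congr rfl fun _ _ ↦ by ring

end Sampling

theorem stmt_15_general {V : Type*} [MeasurableSpace V] (μ : Measure V) [IsProbabilityMeasure μ]
    (N : ℕ) (hN : 1 ≤ N) (G : Set V) (hG : MeasurableSet G)
    (k : ℕ) (hk : k ≤ N - 1) (β : ℝ)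
    (t : ℝ) (htm : t ∈ Set.Ioo (0 : ℝ) 1) (hteq : (1 - β) / N = binCDF N k t)
    (p : ℝ) (hp : p = (μ G).toReal) (hpt : p < t) :
    (Measure.pi fun _ : Fin N => μ) {ω | Nat.card {i : Fin N // ω i ∉ G} ≤ k} <
      ENNReal.ofReal ((1 - β) / N) := by
  rw [ENNReal.lt_ofReal_iff_toReal_lt (measure_ne_top _ _), ← measureReal_def,
    measureReal_pi_card_le μ hG, Fintype.card_fin, hteq]
  subst hp
  exact binCDF_strictMonoOn (by omega) ⟨measureReal_nonneg, measureReal_le_one⟩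
    (Ioo_subset_Icc_self htm) hpt

theorem stmt_15 {V : Type*} [MeasurableSpace V] (μ : Measure V) [IsProbabilityMeasure μ]
    (N : ℕ) (hN : 1 ≤ N) (G : Set V) (hG : MeasurableSet G)
    (k : ℕ) (hk : k ≤ N - 1) (β : ℝ) (hβ : β ∈ Set.Ioo (0 : ℝ) 1)
    (t : ℝ) (htm : t ∈ Set.Ioo (0 : ℝ) 1) (hteq : (1 - β) / N = binCDF N k t)
    (p : ℝ) (hp : p = (μ G).toReal) (hpt : p < t) :
    (Measure.pi fun _ : Fin N => μ) {ω | Nat.card {i : Fin N // ω i ∉ G} ≤ k} <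
      ENNReal.ofReal ((1 - β) / N) :=
  stmt_15_general μ N hN G hG k hk β t htm hteq p hp hpt
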